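/- arXiv:2306.11548 — 4 statements merged into one kernel-verified Lean document; each statement's English description precedes it below -/
import Mathlib

section
/- Let G = (S,E) be a complete graph on ⟨M⟩, let A_i ∈ ℝ^{n×n}, B_i ∈ ℝ^{n×m} for i ∈ ⟨M⟩, and suppose there exist positive definite symmetric matrices {P_s}_{s∈S} and matrices {K_s}_{s∈S} ⊂ ℝ^{m×n} such that for every edge (a,b,i) ∈ E and every x ≠ 0, ((A_i+B_iK_a)x)ᵀ P_b ((A_i+B_iK_a)x) < xᵀP_a x. Then for W(x) = min_{s∈S} xᵀP_s x the following decrease property holds: for every x ≠ 0, every i ∈ ⟨M⟩, and every a ∈ argmin_{s∈S} xᵀP_s x, we have W((A_i + B_iK_a)x) < W(x). -/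
open Matrix

/-- Robust case (Proposition 2): on a complete graph, the path-complete Lyapunov inequalities
imply the strict decrease of `W(x) = min_{s∈S} xᵀ P_s x` along the closed loop, where at each
state the gain `K_a` of any index `a` achieving the minimum is used. -/
theorem pclf_robust_decrease
    {n m M : ℕ} {S : Type} [Fintype S] [Nonempty S]
    (E : S → S → Fin M → Prop)
    (hcomplete : ∀ (a : S) (i : Fin M), ∃ b : S, E a b i)
    (A : Fin M → Matrix (Fin n) (Fin n) ℝ)
    (B : Fin M → Matrix (Fin n) (Fin m) ℝ)
    (P : S → Matrix (Fin n) (Fin n) ℝ) (hP : ∀ s, (P s).PosDef)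
    (K : S → Matrix (Fin m) (Fin n) ℝ)
    (hdec : ∀ (a b : S) (i : Fin M), E a b i → ∀ x : Fin n → ℝ, x ≠ 0 →
      ((A i + B i * K a) *ᵥ x) ⬝ᵥ (P b) *ᵥ ((A i + B i * K a) *ᵥ x) < x ⬝ᵥ (P a) *ᵥ x) :
    let W : (Fin n → ℝ) → ℝ :=
      fun y => Finset.univ.inf' Finset.univ_nonempty (fun s => y ⬝ᵥ (P s) *ᵥ y)
    ∀ x : Fin n → ℝ, x ≠ 0 → ∀ i : Fin M, ∀ a : S,
      (∀ t : S, x ⬝ᵥ (P a) *ᵥ x ≤ x ⬝ᵥ (P t) *ᵥ x) →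
      W ((A i + B i * K a) *ᵥ x) < W x := by
  intro W x hx i a ha
  obtain ⟨b, hb⟩ := hcomplete a i
  have h1 : W ((A i + B i * K a) *ᵥ x) ≤ ((A i + B i * K a) *ᵥ x) ⬝ᵥ (P b) *ᵥ ((A i + B i * K a) *ᵥ x) :=
    Finset.inf'_le _ (Finset.mem_univ b)
  have h2 : x ⬝ᵥ (P a) *ᵥ x ≤ W x := Finset.le_inf' _ _ fun t _ => ha t
  exact lt_of_le_of_lt h1 (lt_of_lt_of_le (hdec a b i hb x hx) h2)
end

section
/- Suppose W : ℝⁿ → ℝ is positive definite, continuous, homogeneous of degree 2, and there exists γ ∈ [0,1) such that for every i ∈ ⟨M⟩ and every x ∈ ℝⁿ, W(f_i(x)) ≤ γ² W(x), where each f_i : ℝⁿ → ℝⁿ satisfies |f_i(x)| ≤ L|x| for some L > 0. Then there exists C > 0 such that every solution of x(k+1) = f_{σ(k)}(x(k)) satisfies |x(k)| ≤ C γᵏ |x(0)| for every switching signal σ : ℕ → ⟨M⟩. -/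
/-- A continuous positive definite Lyapunov function `W`, homogeneous of degree 2, decreasing
by a factor `γ² < 1` along every mode, with linearly bounded dynamics, yields uniform
exponential stability of the switched system with decay rate `γ`. -/
theorem lyapunov_implies_uniform_exponential_stability
    {n M : ℕ} (W : EuclideanSpace ℝ (Fin n) → ℝ)
    (hWcont : Continuous W)
    (hW0 : W 0 = 0) (hWpos : ∀ x : EuclideanSpace ℝ (Fin n), x ≠ 0 → 0 < W x)
    (hWhom : ∀ (c : ℝ), 0 ≤ c → ∀ x : EuclideanSpace ℝ (Fin n), W (c • x) = c ^ 2 * W x)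
    (f : Fin M → EuclideanSpace ℝ (Fin n) → EuclideanSpace ℝ (Fin n))
    (L : ℝ) (hL : 0 < L) (hlin : ∀ (i : Fin M) (x : EuclideanSpace ℝ (Fin n)), ‖f i x‖ ≤ L * ‖x‖)
    (γ : ℝ) (hγ0 : 0 ≤ γ) (hγ1 : γ < 1)
    (hdec : ∀ (i : Fin M) (x : EuclideanSpace ℝ (Fin n)), W (f i x) ≤ γ ^ 2 * W x) :
    ∃ C : ℝ, 0 < C ∧ ∀ (σ : ℕ → Fin M) (x : ℕ → EuclideanSpace ℝ (Fin n)),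
      (∀ k : ℕ, x (k + 1) = f (σ k) (x k)) →
      ∀ k : ℕ, ‖x k‖ ≤ C * γ ^ k * ‖x 0‖ := by
  by_cases hn : ∃ y : EuclideanSpace ℝ (Fin n), y ≠ 0
  · obtain ⟨y, hy⟩ := hn
    set S := Metric.sphere (0 : EuclideanSpace ℝ (Fin n)) 1 with hS
    have hScomp : IsCompact S := isCompact_sphere 0 1
    have hSne : S.Nonempty := by
      refine ⟨‖y‖⁻¹ • y, ?_⟩
      simp [hS, norm_smul, inv_mul_cancel₀ (norm_ne_zero_iff.2 hy)]
    obtain ⟨a, haS, hamin⟩ := hScomp.exists_isMinOn hSne hWcont.continuousOn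
    obtain ⟨b, hbS, hbmax⟩ := hScomp.exists_isMaxOn hSne hWcont.continuousOn
    set α₁ := W a with hα₁def
    set α₂ := W b with hα₂def
    have ha0 : a ≠ 0 := by
      intro h
      rw [hS] at haS
      simp [h] at haS
    have hα₁ : 0 < α₁ := hWpos a ha0
    have hα₂ : α₁ ≤ α₂ := hbmax haS
    have key : ∀ x : EuclideanSpace ℝ (Fin n),
        α₁ * ‖x‖ ^ 2 ≤ W x ∧ W x ≤ α₂ * ‖x‖ ^ 2 := by
      intro x
      by_cases hx : x = 0
      · simp [hx, hW0]
      · set u := ‖x‖⁻¹ • x with hu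
        have hux : ‖x‖ • u = x := by
          rw [hu, smul_smul, mul_inv_cancel₀ (norm_ne_zero_iff.2 hx), one_smul]
        have huS : u ∈ S := by
          simp [hS, hu, norm_smul, inv_mul_cancel₀ (norm_ne_zero_iff.2 hx)]
        have hWx : W x = ‖x‖ ^ 2 * W u := by
          conv_lhs => rw [← hux]
          exact hWhom _ (norm_nonneg x) u
        constructor
        · rw [hWx, mul_comm]
          exact mul_le_mul_of_nonneg_left (hamin huS) (by positivity)
        · rw [hWx, mul_comm (α₂)]
          exact mul_le_mul_of_nonneg_left (hbmax huS) (by positivity)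
    have hα₂pos : 0 < α₂ := hα₁.trans_le hα₂
    refine ⟨Real.sqrt (α₂ / α₁), Real.sqrt_pos.2 (div_pos hα₂pos hα₁), fun σ x hx k => ?_⟩
    have hWk : W (x k) ≤ (γ ^ k) ^ 2 * W (x 0) := by
      induction k with
      | zero => simp
      | succ k ih =>
        have := hdec (σ k) (x k)
        rw [← hx k] at this
        calc W (x (k + 1)) ≤ γ ^ 2 * W (x k) := this
          _ ≤ γ ^ 2 * ((γ ^ k) ^ 2 * W (x 0)) := by
              apply mul_le_mul_of_nonneg_left ih (by positivity)
          _ = (γ ^ (k + 1)) ^ 2 * W (x 0) := by ring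
    have h1 : α₁ * ‖x k‖ ^ 2 ≤ (γ ^ k) ^ 2 * (α₂ * ‖x 0‖ ^ 2) :=
      le_trans (key (x k)).1 (le_trans hWk
        (mul_le_mul_of_nonneg_left (key (x 0)).2 (by positivity)))
    have h2 : ‖x k‖ ^ 2 ≤ (Real.sqrt (α₂ / α₁) * γ ^ k * ‖x 0‖) ^ 2 := by
      have hs : Real.sqrt (α₂ / α₁) ^ 2 = α₂ / α₁ := Real.sq_sqrt (div_pos hα₂pos hα₁).le
      have : (Real.sqrt (α₂ / α₁) * γ ^ k * ‖x 0‖) ^ 2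
          = (α₂ / α₁) * ((γ ^ k) ^ 2 * ‖x 0‖ ^ 2) := by
        rw [mul_pow, mul_pow, hs]; ring
      rw [this]
      rw [← le_div_iff₀' hα₁] at h1
      calc ‖x k‖ ^ 2 ≤ (γ ^ k) ^ 2 * (α₂ * ‖x 0‖ ^ 2) / α₁ := h1
        _ = (α₂ / α₁) * ((γ ^ k) ^ 2 * ‖x 0‖ ^ 2) := by ring
    calc ‖x k‖ = Real.sqrt (‖x k‖ ^ 2) := (Real.sqrt_sq (norm_nonneg _)).symm
      _ ≤ Real.sqrt ((Real.sqrt (α₂ / α₁) * γ ^ k * ‖x 0‖) ^ 2) := Real.sqrt_le_sqrt h2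
      _ = Real.sqrt (α₂ / α₁) * γ ^ k * ‖x 0‖ := Real.sqrt_sq (by positivity)
  · push_neg at hn
    refine ⟨1, one_pos, fun σ x _ k => ?_⟩
    simp [hn (x k), hn (x 0)]
end

section
/- Let G = (S,E) be a complete and deterministic graph on ⟨M⟩, and suppose there are symmetric positive definite {P_s}_{s∈S} and matrices {K_{s,j}}_{(s,j) ∈ S×⟨M⟩} ⊂ ℝ^{m×n} with (A_i+B_iK_{a,i})ᵀ P_b (A_i+B_iK_{a,i}) − P_a ≺ 0 for all edges (a,b,i) ∈ E. Then with W(x) = min_{s∈S} xᵀP_s x, for every x ≠ 0, every i ∈ ⟨M⟩, and every a ∈ argmin_{s∈S} xᵀP_s x, we have W((A_i + B_iK_{a,i})x) < W(x). -/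
open Matrix

/-- Mode-dependent case (Proposition 6): on a complete and deterministic graph, the
edge-wise Lyapunov inequalities with mode-dependent gains `K_{a,i}` imply strict decrease of
`W(x) = min_{s∈S} xᵀ P_s x` along the mode-dependent closed loop. -/
theorem pclf_mode_dependent_decrease
    {n m M : ℕ} {S : Type} [Fintype S] [Nonempty S]
    (E : S → S → Fin M → Prop)
    (hcomplete : ∀ (a : S) (i : Fin M), ∃ b : S, E a b i)
    (hdet : ∀ (a b b' : S) (i : Fin M), E a b i → E a b' i → b = b')
    (A : Fin M → Matrix (Fin n) (Fin n) ℝ)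
    (B : Fin M → Matrix (Fin n) (Fin m) ℝ)
    (P : S → Matrix (Fin n) (Fin n) ℝ) (hP : ∀ s, (P s).PosDef)
    (K : S → Fin M → Matrix (Fin m) (Fin n) ℝ)
    (hdec : ∀ (a b : S) (i : Fin M), E a b i →
      (-((A i + B i * K a i)ᵀ * P b * (A i + B i * K a i) - P a)).PosDef) :
    let W : (Fin n → ℝ) → ℝ :=
      fun y => Finset.univ.inf' Finset.univ_nonempty (fun s => y ⬝ᵥ (P s) *ᵥ y)
    ∀ x : Fin n → ℝ, x ≠ 0 → ∀ i : Fin M, ∀ a : S,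
      (∀ t : S, x ⬝ᵥ (P a) *ᵥ x ≤ x ⬝ᵥ (P t) *ᵥ x) →
      W ((A i + B i * K a i) *ᵥ x) < W x := by
  intro W x hx i a ha
  obtain ⟨b, hb⟩ := hcomplete a i
  set Mc := A i + B i * K a i with hMc
  have hpos := (hdec a b i hb).dotProduct_mulVec_pos hx
  -- compute the quadratic form
  have hquad : (Mc *ᵥ x) ⬝ᵥ P b *ᵥ (Mc *ᵥ x) < x ⬝ᵥ P a *ᵥ x := by
    have : 0 < x ⬝ᵥ (-(Mcᵀ * P b * Mc - P a)) *ᵥ x := by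
      simpa only [star_trivial] using hpos
    have h2 : x ⬝ᵥ (Mcᵀ * P b * Mc) *ᵥ x < x ⬝ᵥ (P a) *ᵥ x := by
      rw [neg_mulVec, sub_mulVec, dotProduct_neg, dotProduct_sub] at this
      linarith
    calc (Mc *ᵥ x) ⬝ᵥ P b *ᵥ (Mc *ᵥ x)
        = x ⬝ᵥ (Mcᵀ * P b * Mc) *ᵥ x := by
          rw [← mulVec_mulVec, ← mulVec_mulVec, dotProduct_mulVec x,
            vecMul_transpose]
      _ < x ⬝ᵥ (P a) *ᵥ x := h2
  have hW1 : W (Mc *ᵥ x) ≤ (Mc *ᵥ x) ⬝ᵥ P b *ᵥ (Mc *ᵥ x) :=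
    Finset.inf'_le _ (Finset.mem_univ b)
  have hW2 : x ⬝ᵥ P a *ᵥ x ≤ W x :=
    Finset.le_inf' _ _ (fun t _ => ha t)
  exact lt_of_le_of_lt hW1 (lt_of_lt_of_le hquad hW2)
end

section
/- If the LMI conditions associated with the De Bruijn graph of order l are feasible, then the conditions associated with the De Bruijn graph of order l+1 are feasible. Precisely: if there exist symmetric matrices {P̄_î}_{î∈⟨M⟩^l} and matrices {K̄_î}_{î∈⟨M⟩^l} such that for all î = (i₁,…,i_l) ∈ ⟨M⟩^l and h ∈ ⟨M⟩ the block matrix [[P̄_{(h,î⁻)}, A_h P̄_î + B_h K̄_î],[(A_h P̄_î + B_h K̄_î)ᵀ, P̄_î]] is positive definite (with î⁻ = (i₁,…,i_{l-1})), then defining Q̄_ĵ := P̄_{ĵ⁻} and L̄_ĵ := K̄_{ĵ⁻} for ĵ ∈ ⟨M⟩^{l+1} satisfies the order-(l+1) conditions. -/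
open Matrix

/-- `(h, i₁, …, i_{l-1})` from `(i₁, …, i_l)`: shift in a label `h` on the left. -/
def deBruijnSucc {M l : ℕ} (h : Fin M) (a : Fin l → Fin M) : Fin l → Fin M :=
  fun k => if _ : (k : ℕ) = 0 then h
    else a ⟨(k : ℕ) - 1, Nat.lt_of_le_of_lt (Nat.sub_le _ _) k.2⟩

/-- Monotonicity of the De Bruijn LMI hierarchy: feasibility at order `l` implies feasibility
at order `l+1`, by setting `Q̄_ĵ := P̄_{ĵ⁻}` and `L̄_ĵ := K̄_{ĵ⁻}` where `ĵ⁻` drops the last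
index of `ĵ`. -/
theorem deBruijn_lmi_hierarchy_monotone
    {n m M l : ℕ}
    (A : Fin M → Matrix (Fin n) (Fin n) ℝ)
    (B : Fin M → Matrix (Fin n) (Fin m) ℝ)
    (P : (Fin l → Fin M) → Matrix (Fin n) (Fin n) ℝ)
    (hsym : ∀ i, (P i).IsSymm)
    (K : (Fin l → Fin M) → Matrix (Fin m) (Fin n) ℝ)
    (hfeas : ∀ (i : Fin l → Fin M) (h : Fin M),
      (Matrix.fromBlocks (P (deBruijnSucc h i)) (A h * P i + B h * K i)
        (A h * P i + B h * K i)ᵀ (P i)).PosDef) :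
    let Q : (Fin (l + 1) → Fin M) → Matrix (Fin n) (Fin n) ℝ :=
      fun j => P (j ∘ Fin.castSucc)
    let L : (Fin (l + 1) → Fin M) → Matrix (Fin m) (Fin n) ℝ :=
      fun j => K (j ∘ Fin.castSucc)
    ∀ (j : Fin (l + 1) → Fin M) (h : Fin M),
      (Matrix.fromBlocks (Q (deBruijnSucc h j)) (A h * Q j + B h * L j)
        (A h * Q j + B h * L j)ᵀ (Q j)).PosDef := by
  intro Q L j h
  have key : deBruijnSucc h j ∘ Fin.castSucc = deBruijnSucc h (j ∘ Fin.castSucc) := by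
    funext k
    simp only [Function.comp, deBruijnSucc, Fin.coe_castSucc]
    split
    · rfl
    · congr 1
  simp only [Q, L, key]
  exact hfeas _ h
end
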